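/- For any two distinct rows of the fractal star matrix M_{q,m}, there is a column in which both rows have numerical values and these values differ. -/

import Mathlib

/-- The subcube of `(Z_q)^C` defined by a star pattern `p` (`none` = `*`):
all vectors agreeing with `p` on every coordinate where `p` is numerical. -/
def Subcube {q : ℕ} {C : Type} (p : C → Option (ZMod q)) : Set (C → ZMod q) :=
  {x | ∀ c : C, ∀ a : ZMod q, p c = some a → x c = a}

/-- The number of numerical entries of a star pattern. -/
noncomputable def numCount {q : ℕ} {C : Type} (p : C → Option (ZMod q)) : ℕ :=
  Nat.card {c : C // (p c).isSome}

/-- The rows of the star matrix `M` define pairwise disjoint subcubes covering the cube. -/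
def IsPartitionMatrix (q : ℕ) {R C : Type} (M : R → C → Option (ZMod q)) : Prop :=
  (∀ r r' : R, r ≠ r' → Subcube (M r) ∩ Subcube (M r') = ∅) ∧
  (∀ x : C → ZMod q, ∃ r : R, x ∈ Subcube (M r))

/-- A star matrix is A-primitive if every column has at least one numerical entry. -/
def APrimitive {q : ℕ} {R C : Type} (M : R → C → Option (ZMod q)) : Prop :=
  ∀ c : C, ∃ r : R, (M r c).isSome

/-- Number of rows of the fractal matrix `M_{q,m}`. -/
def Nrows (q : ℕ) : ℕ → ℕ
  | 0 => 1
  | m + 1 => q * Nrows q m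

/-- Number of columns of the fractal matrix `M_{q,m}`. -/
def Ncols (q : ℕ) : ℕ → ℕ
  | 0 => 0
  | m + 1 => 1 + q * Ncols q m

/-- Entry of the fractal matrix `M_{q,m}` in row `r`, column `c` (as natural number
indices): `M_{q,0}` has one row and no columns; `M_{q,m+1}` consists of `q` horizontal
stripes indexed by `a ∈ Z_q`, stripe `a` having the constant value `a` in the first
column, a copy of `M_{q,m}` in the `a`-th of `q` column blocks, and all-stars elsewhere. -/
def fractalEntry (q : ℕ) : ℕ → ℕ → ℕ → Option (ZMod q)
  | 0, _, _ => none
  | m + 1, r, c =>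
    if c = 0 then some (Nat.cast (r / Nrows q m))
    else if (c - 1) / Ncols q m = r / Nrows q m then
      fractalEntry q m (r % Nrows q m) ((c - 1) % Ncols q m)
    else none

/-- The fractal star matrix `M_{q,m}`. -/
def fractalMatrix (q m : ℕ) : Fin (Nrows q m) → Fin (Ncols q m) → Option (ZMod q) :=
  fun r c => fractalEntry q m r.1 c.1

/-! Induction on `m`. Write a row of `M_{q,m+1}` as `d * Nrows q m + s` with stripe `d < q`.
Rows in different stripes are separated by the first column, which holds the stripe index;
rows in the same stripe differ in `s` and are separated inside that stripe's copy of `M_{q,m}`. -/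

theorem Nat.exists_eq_mul_add_of_lt_mul {r q N : ℕ} (h : r < q * N) :
    ∃ d < q, ∃ s < N, r = d * N + s :=
  ⟨r / N, Nat.div_lt_of_lt_mul (by rwa [Nat.mul_comm]),
    r % N, Nat.mod_lt _ (Nat.pos_of_mul_pos_left (Nat.zero_lt_of_lt h)),
    (Nat.div_add_mod' r N).symm⟩

theorem Nat.mul_add_div_of_lt {d N s : ℕ} (hs : s < N) : (d * N + s) / N = d := by
  rw [Nat.add_comm, Nat.add_mul_div_right _ _ (Nat.zero_lt_of_lt hs), Nat.div_eq_of_lt hs,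
    Nat.zero_add]

section FractalEntry

variable {q m d s : ℕ}

theorem fractalEntry_succ_first_col (hs : s < Nrows q m) :
    fractalEntry q (m + 1) (d * Nrows q m + s) 0 = some (d : ZMod q) := by
  simp [fractalEntry, Nat.mul_add_div_of_lt hs]

theorem fractalEntry_succ_block {c : ℕ} (hs : s < Nrows q m) (hc : c < Ncols q m) :
    fractalEntry q (m + 1) (d * Nrows q m + s) (1 + d * Ncols q m + c) =
      fractalEntry q m s c := by
  have hcol : 1 + d * Ncols q m + c - 1 = d * Ncols q m + c := by omega
  simp [fractalEntry, hcol, Nat.mul_add_div_of_lt hs, Nat.mul_add_div_of_lt hc,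
    Nat.mul_add_mod_of_lt hs, Nat.mul_add_mod_of_lt hc]

end FractalEntry

theorem exists_fractalEntry_some_ne (q m : ℕ) {r r' : ℕ} (hr : r < Nrows q m)
    (hr' : r' < Nrows q m) (hne : r ≠ r') :
    ∃ c < Ncols q m, ∃ a b : ZMod q,
      fractalEntry q m r c = some a ∧ fractalEntry q m r' c = some b ∧ a ≠ b := by
  induction m generalizing r r' with
  | zero => simp only [Nrows] at hr hr'; omega
  | succ m ih =>
    obtain ⟨d, hd, s, hs, rfl⟩ := Nat.exists_eq_mul_add_of_lt_mul hr
    obtain ⟨d', hd', s', hs', rfl⟩ := Nat.exists_eq_mul_add_of_lt_mul hr'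
    by_cases hdd : d = d'
    · subst hdd
      obtain ⟨c, hc, a, b, ha, hb, hab⟩ := ih hs hs' (by rintro rfl; exact hne rfl)
      refine ⟨1 + d * Ncols q m + c, ?_, a, b, ?_, ?_, hab⟩
      · simp only [Ncols]; nlinarith
      · rwa [fractalEntry_succ_block hs hc]
      · rwa [fractalEntry_succ_block hs' hc]
    · refine ⟨0, by simp [Ncols], d, d', fractalEntry_succ_first_col hs,
        fractalEntry_succ_first_col hs', ?_⟩
      rwa [Ne, ZMod.natCast_eq_natCast_iff', Nat.mod_eq_of_lt hd, Nat.mod_eq_of_lt hd']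

theorem stmt7_general (q m : ℕ)
    (r r' : Fin (Nrows q m)) (hne : r ≠ r') :
    ∃ c : Fin (Ncols q m), ∃ a b : ZMod q,
      fractalMatrix q m r c = some a ∧ fractalMatrix q m r' c = some b ∧ a ≠ b := by
  obtain ⟨c, hc, a, b, ha, hb, hab⟩ :=
    exists_fractalEntry_some_ne q m r.2 r'.2 (Fin.val_ne_of_ne hne)
  exact ⟨⟨c, hc⟩, a, b, ha, hb, hab⟩

/-- For any two distinct rows of `M_{q,m}` there is a column in which both rows
have numerical values and these values differ. -/
theorem stmt7 (q m : ℕ) (hq : 2 ≤ q) (hm : 1 ≤ m)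
    (r r' : Fin (Nrows q m)) (hne : r ≠ r') :
    ∃ c : Fin (Ncols q m), ∃ a b : ZMod q,
      fractalMatrix q m r c = some a ∧ fractalMatrix q m r' c = some b ∧ a ≠ b :=
  stmt7_general q m r r' hne
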